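/- arXiv:2111.06888 — 5 statements merged into one kernel-verified Lean document; each statement's English description precedes it below -/
import Mathlib

section
/- For independent Gumbel(0) random variables γ_1,...,γ_K and logits l ∈ ℝ^K, the probability that index x is the argmax of (l_k + γ_k) equals exp(l_x) / Σ_k exp(l_k). -/
open MeasureTheory

/-- The standard Gumbel(0) distribution, generated as `-log (-log u)` for `u` uniform on `(0,1)`. -/
noncomputable def gumbel : Measure ℝ :=
  ((volume.restrict (Set.Ioo (0:ℝ) 1)).map fun u => -Real.log (-Real.log u))

lemma gumbel_meas : Measurable fun u : ℝ => -Real.log (-Real.log u) :=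
  (Real.measurable_log.comp Real.measurable_log.neg).neg

instance : IsProbabilityMeasure (volume.restrict (Set.Ioo (0:ℝ) 1)) :=
  ⟨by simp [Real.volume_Ioo]⟩

instance : IsProbabilityMeasure gumbel :=
  Measure.isProbabilityMeasure_map gumbel_meas.aemeasurable

lemma gumbel_Iio (t : ℝ) :
    gumbel (Set.Iio t) = ENNReal.ofReal (Real.exp (-Real.exp (-t))) := by
  have hE0 : 0 < Real.exp (-Real.exp (-t)) := Real.exp_pos _
  have hE1 : Real.exp (-Real.exp (-t)) < 1 := by
    rw [Real.exp_lt_one_iff]; simpa using Real.exp_pos (-t)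
  rw [gumbel, Measure.map_apply gumbel_meas measurableSet_Iio,
    Measure.restrict_apply' measurableSet_Ioo]
  have hset : (fun u : ℝ => -Real.log (-Real.log u)) ⁻¹' Set.Iio t ∩ Set.Ioo 0 1
      = Set.Ioo 0 (Real.exp (-Real.exp (-t))) := by
    ext u
    simp only [Set.mem_inter_iff, Set.mem_preimage, Set.mem_Iio, Set.mem_Ioo]
    constructor
    · rintro ⟨hm, hu0, hu1⟩
      have hlu : Real.log u < 0 := Real.log_neg hu0 hu1
      have h1 : -t < Real.log (-Real.log u) := by linarith [neg_lt.mp hm]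
      have h2 : Real.exp (-t) < -Real.log u :=
        (Real.lt_log_iff_exp_lt (by linarith)).mp h1
      have h3 : Real.log u < -Real.exp (-t) := by linarith
      exact ⟨hu0, (Real.log_lt_iff_lt_exp hu0).mp h3⟩
    · rintro ⟨hu0, huE⟩
      have hu1 : u < 1 := huE.trans hE1
      have h3 : Real.log u < -Real.exp (-t) := (Real.log_lt_iff_lt_exp hu0).mpr huE
      have h2 : Real.exp (-t) < -Real.log u := by linarith
      have h1 : -t < Real.log (-Real.log u) :=
        (Real.lt_log_iff_exp_lt (by linarith [Real.exp_pos (-t)])).mpr h2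
      exact ⟨by linarith, hu0, hu1⟩
  rw [hset, Real.volume_Ioo, sub_zero]

/-- Gumbel-max trick: for i.i.d. Gumbel(0) noise `γ` and logits `l`, the probability that
`x` is the (strict) argmax of `l k + γ k` equals `exp (l x) / ∑ k, exp (l k)`. -/
theorem stmt_0 (K : ℕ) (hK : 0 < K) (l : Fin K → ℝ) (x : Fin K) :
    (Measure.pi fun _ : Fin K => gumbel)
      {γ | ∀ k, k ≠ x → l k + γ k < l x + γ x} =
      ENNReal.ofReal (Real.exp (l x) / ∑ k, Real.exp (l k)) := by
  obtain ⟨n, rfl⟩ := Nat.exists_eq_succ_of_ne_zero hK.ne'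
  set A : ℝ := ∑ j : Fin n, Real.exp (l (x.succAbove j) - l x) with hA
  have hA0 : 0 ≤ A := Finset.sum_nonneg fun j _ => (Real.exp_pos _).le
  -- the event as a preimage under piFinSuccAbove
  set T : Set (ℝ × (Fin n → ℝ)) :=
    {p | ∀ j, l (x.succAbove j) + p.2 j < l x + p.1} with hTdef
  have hT : MeasurableSet T := by
    have : T = ⋂ j : Fin n, {p : ℝ × (Fin n → ℝ) | l (x.succAbove j) + p.2 j < l x + p.1} := by
      ext p; simp [hTdef, Set.mem_iInter]
    rw [this]
    exact MeasurableSet.iInter fun j => measurableSet_lt (by fun_prop) (by fun_prop)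
  have hpre : (MeasurableEquiv.piFinSuccAbove (fun _ => ℝ) x) ⁻¹' T
      = {γ : Fin (n+1) → ℝ | ∀ k, k ≠ x → l k + γ k < l x + γ x} := by
    ext γ
    simp only [Set.mem_preimage, hTdef, Set.mem_setOf_eq,
      MeasurableEquiv.piFinSuccAbove_apply]
    constructor
    · intro h k hk
      obtain ⟨j, rfl⟩ := Fin.exists_succAbove_eq hk
      exact h j
    · intro h j
      exact h _ (x.succAbove_ne j)
  have hmp := (measurePreserving_piFinSuccAbove (fun _ : Fin (n+1) => gumbel) x)
  rw [← hpre, hmp.measure_preimage hT.nullMeasurableSet]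
  rw [Measure.prod_apply hT]
  -- compute inner slice measure
  have hslice : ∀ t : ℝ,
      (Measure.pi fun _ : Fin n => gumbel) (Prod.mk t ⁻¹' T)
        = ENNReal.ofReal (Real.exp (-(Real.exp (-t) * A))) := by
    intro t
    have hpi : Prod.mk t ⁻¹' T
        = Set.pi Set.univ (fun j : Fin n => Set.Iio (l x + t - l (x.succAbove j))) := by
      ext γ'
      simp only [Set.mem_preimage, hTdef, Set.mem_setOf_eq, Set.mem_pi, Set.mem_univ,
        Set.mem_Iio, forall_true_left]
      constructor
      · intro h j; linarith [h j]
      · intro h j; linarith [h j]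
    rw [hpi, Measure.pi_pi]
    have : ∀ j : Fin n, gumbel (Set.Iio (l x + t - l (x.succAbove j)))
        = ENNReal.ofReal (Real.exp (-(Real.exp (-t) * Real.exp (l (x.succAbove j) - l x)))) := by
      intro j
      rw [gumbel_Iio]
      congr 2
      rw [← Real.exp_add]
      ring_nf
    simp_rw [this]
    rw [← ENNReal.ofReal_prod_of_nonneg fun j _ => (Real.exp_pos _).le]
    congr 1
    rw [← Real.exp_sum]
    congr 1
    rw [hA, Finset.mul_sum, ← Finset.sum_neg_distrib]
  simp_rw [hslice]
  -- transfer the outer integral to the uniform variable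
  rw [gumbel, lintegral_map (by fun_prop) gumbel_meas]
  have hcong : ∫⁻ u in Set.Ioo (0:ℝ) 1,
        ENNReal.ofReal (Real.exp (-(Real.exp (-(-Real.log (-Real.log u))) * A)))
      = ∫⁻ u in Set.Ioo (0:ℝ) 1, ENNReal.ofReal (u ^ A) := by
    refine setLIntegral_congr_fun measurableSet_Ioo ?_
    intro u hu
    dsimp only
    have hlu : Real.log u < 0 := Real.log_neg hu.1 hu.2
    have h1 : Real.exp (-(-Real.log (-Real.log u))) = -Real.log u := by
      rw [neg_neg, Real.exp_log (by linarith)]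
    rw [h1]
    congr 1
    rw [Real.rpow_def_of_pos hu.1]
    congr 1
    ring
  rw [hcong]
  -- compute ∫ u^A on (0,1)
  have hint : IntegrableOn (fun u : ℝ => u ^ A) (Set.Ioc (0:ℝ) 1) := by
    have := intervalIntegral.intervalIntegrable_rpow (μ := volume) (r := A) (a := 0) (b := 1)
      (Or.inl hA0)
    simpa [intervalIntegrable_iff, Set.uIoc_of_le (by norm_num : (0:ℝ) ≤ 1)] using this
  have hIoo : IntegrableOn (fun u : ℝ => u ^ A) (Set.Ioo (0:ℝ) 1) :=
    hint.mono_set Set.Ioo_subset_Ioc_self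
  rw [← ofReal_integral_eq_lintegral_ofReal hIoo
    ((ae_restrict_iff' measurableSet_Ioo).mpr
      (Filter.Eventually.of_forall fun u hu => Real.rpow_nonneg hu.1.le A))]
  have hval : ∫ u in Set.Ioo (0:ℝ) 1, u ^ A = 1 / (A + 1) := by
    rw [← integral_Ioc_eq_integral_Ioo,
      ← intervalIntegral.integral_of_le (by norm_num : (0:ℝ) ≤ 1),
      integral_rpow (Or.inl (by linarith)), Real.one_rpow,
      Real.zero_rpow (by linarith), sub_zero]
  rw [hval]
  congr 1
  have hS : (0:ℝ) < ∑ k, Real.exp (l k) :=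
    Finset.sum_pos (fun _ _ => Real.exp_pos _) ⟨x, Finset.mem_univ x⟩
  have hsum : A + 1 = (∑ k, Real.exp (l k)) / Real.exp (l x) := by
    have h1 : ∑ k : Fin (n+1), Real.exp (l k - l x) = 1 + A := by
      rw [Fin.sum_univ_succAbove (fun k => Real.exp (l k - l x)) x]
      simp [hA]
    have h2 : ∑ k : Fin (n+1), Real.exp (l k - l x)
        = (∑ k, Real.exp (l k)) / Real.exp (l x) := by
      simp_rw [Real.exp_sub]
      rw [Finset.sum_div]
    rw [← h2, h1, add_comm]
  rw [hsum, one_div_div]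
end

section
/- If the Gumbel-max coupling of strictly positive distributions p and q assigns probability α to the event x = y, then any maximal coupling assigns probability at most 2α to the event x = y. -/
open Finset in
/-- If the Gumbel-max coupling assigns total probability `α` to the event `x = y`
(the sum over `i` of `1 / (1 + ∑_{j ≠ i} max (p j / p i) (q j / q i))`), then a maximal
coupling assigns probability `∑ i, min (p i) (q i) ≤ 2 * α` to `x = y`. -/
theorem stmt_6 (K : ℕ) (p q : Fin K → ℝ)
    (hp : ∀ j, 0 < p j) (hq : ∀ j, 0 < q j)
    (hpsum : ∑ j, p j = 1) (hqsum : ∑ j, q j = 1) (α : ℝ)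
    (hα : α = ∑ i, 1 / (1 + ∑ j ∈ univ.erase i, max (p j / p i) (q j / q i))) :
    ∑ i, min (p i) (q i) ≤ 2 * α := by
  set M : ℝ := ∑ j, max (p j) (q j) with hMdef
  have hM1 : (1:ℝ) ≤ M := by
    rw [← hpsum]; exact Finset.sum_le_sum fun j _ => le_max_left _ _
  have hM0 : (0:ℝ) < M := lt_of_lt_of_le one_pos hM1
  set m : ℝ := ∑ i, min (p i) (q i) with hmdef
  have hm0 : 0 ≤ m :=
    Finset.sum_nonneg fun i _ => (lt_min (hp i) (hq i)).le
  have hMm : M + m = 2 := by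
    rw [hMdef, hmdef, ← Finset.sum_add_distrib]
    have h : ∀ i : Fin K, max (p i) (q i) + min (p i) (q i) = p i + q i :=
      fun i => max_add_min _ _
    rw [Finset.sum_congr rfl fun i _ => h i, Finset.sum_add_distrib, hpsum, hqsum]
    norm_num
  have key : ∀ i : Fin K,
      min (p i) (q i) / M ≤ 1 / (1 + ∑ j ∈ univ.erase i, max (p j / p i) (q j / q i)) := by
    intro i
    set S : ℝ := ∑ j ∈ univ.erase i, max (p j / p i) (q j / q i) with hSdef
    have hS0 : 0 ≤ S :=
      Finset.sum_nonneg fun j _ =>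
        le_trans (div_nonneg (hp j).le (hp i).le) (le_max_left _ _)
    have hden : (0:ℝ) < 1 + S := by linarith
    rw [div_le_div_iff₀ hM0 hden]
    have hexp : min (p i) (q i) * (1 + S) =
        min (p i) (q i) + ∑ j ∈ univ.erase i, min (p i) (q i) * max (p j / p i) (q j / q i) := by
      rw [mul_add, mul_one, Finset.mul_sum]
    have hbound : ∀ j ∈ univ.erase i,
        min (p i) (q i) * max (p j / p i) (q j / q i) ≤ max (p j) (q j) := by
      intro j _
      rw [mul_max_of_nonneg _ _ (lt_min (hp i) (hq i)).le]
      apply max_le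
      · calc min (p i) (q i) * (p j / p i) ≤ p i * (p j / p i) := by
              apply mul_le_mul_of_nonneg_right (min_le_left _ _)
              exact div_nonneg (hp j).le (hp i).le
          _ = p j := by rw [mul_comm]; exact div_mul_cancel₀ _ (hp i).ne'
          _ ≤ max (p j) (q j) := le_max_left _ _
      · calc min (p i) (q i) * (q j / q i) ≤ q i * (q j / q i) := by
              apply mul_le_mul_of_nonneg_right (min_le_right _ _)
              exact div_nonneg (hq j).le (hq i).le
          _ = q j := by rw [mul_comm]; exact div_mul_cancel₀ _ (hq i).ne'
          _ ≤ max (p j) (q j) := le_max_right _ _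
    calc min (p i) (q i) * (1 + S)
        ≤ max (p i) (q i) + ∑ j ∈ univ.erase i, max (p j) (q j) := by
          rw [hexp]
          exact add_le_add (min_le_max) (Finset.sum_le_sum hbound)
      _ = M := Finset.add_sum_erase univ (fun j => max (p j) (q j)) (Finset.mem_univ i)
      _ = 1 * M := (one_mul M).symm
  have hα' : m / M ≤ α := by
    rw [hα, hmdef, Finset.sum_div]
    exact Finset.sum_le_sum fun i _ => key i
  have hM2 : M ≤ 2 := by linarith
  have : m ≤ 2 * (m / M) := by
    rw [← mul_div_assoc, le_div_iff₀ hM0]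
    nlinarith
  linarith
end

section
/- There is no family of measurable functions F_p : Ω → {1,2,3}, indexed by probability distributions p on {1,2,3} over a probability space (Ω, μ), such that both (1) μ(F_p^{-1}(i)) = p_i for all p and i, and (2) μ(F_p^{-1}(i) ∩ F_q^{-1}(i)) = min(μ(F_p^{-1}(i)), μ(F_q^{-1}(i))) for all p, q, and i. -/
/-!
Take the three distributions that are uniform on a pair of labels. Any two of them share a
label of mass `1/2`, and a maximal coupling of two marginals that agree at a label makes the two
functions take that label together on a set of measure `1/2`. The three resulting agreement events
are pairwise disjoint, because any two of them ask the same `F_p` to take two different values;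
so their measures, `3/2` in total, cannot fit into a probability space.
-/

open MeasureTheory

section UniformOnPair

variable {ι : Type*} [DecidableEq ι]

/-- For `i = j` this is the point mass at `i`. -/
noncomputable def uniformOnPair (i j : ι) : ι → ℝ := Pi.single i 2⁻¹ + Pi.single j 2⁻¹

lemma uniformOnPair_nonneg (i j k : ι) : 0 ≤ uniformOnPair i j k := by
  simp only [uniformOnPair, Pi.add_apply, Pi.single_apply]
  split_ifs <;> norm_num

lemma sum_uniformOnPair [Fintype ι] (i j : ι) : ∑ k, uniformOnPair i j k = 1 := by
  simp only [uniformOnPair, Pi.add_apply, Finset.sum_add_distrib, Finset.sum_pi_single',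
    Finset.mem_univ, if_true]
  norm_num

lemma uniformOnPair_apply_left {i j : ι} (h : i ≠ j) : uniformOnPair i j i = 2⁻¹ := by
  simp [uniformOnPair, h]

lemma uniformOnPair_apply_right {i j : ι} (h : i ≠ j) : uniformOnPair i j j = 2⁻¹ := by
  simp [uniformOnPair, h]

end UniformOnPair

lemma measure_add_measure_add_measure_le_one {Ω : Type*} [MeasurableSpace Ω] {μ : Measure Ω}
    [IsProbabilityMeasure μ] {E₁ E₂ E₃ : Set Ω} (h₁₂ : Disjoint E₁ E₂) (h₁₃ : Disjoint E₁ E₃)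
    (h₂₃ : Disjoint E₂ E₃) (hE₂ : MeasurableSet E₂) (hE₃ : MeasurableSet E₃) :
    μ E₁ + μ E₂ + μ E₃ ≤ 1 := by
  rw [← measure_union h₁₂ hE₂, ← measure_union (Set.disjoint_union_left.2 ⟨h₁₃, h₂₃⟩) hE₃]
  exact prob_le_one

lemma measure_agreement_events_sum_le_one {Ω α : Type*} [MeasurableSpace Ω]
    [MeasurableSpace α] [MeasurableSingletonClass α] {μ : Measure Ω} [IsProbabilityMeasure μ]
    {f g h : Ω → α} (hf : Measurable f) (hg : Measurable g) (hh : Measurable h) {a b c : α}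
    (hab : a ≠ b) (hac : a ≠ c) (hbc : b ≠ c) :
    μ (f ⁻¹' {a} ∩ g ⁻¹' {a}) + μ (f ⁻¹' {b} ∩ h ⁻¹' {b}) + μ (g ⁻¹' {c} ∩ h ⁻¹' {c}) ≤ 1 := by
  refine measure_add_measure_add_measure_le_one ?_ ?_ ?_
    ((hf (measurableSet_singleton b)).inter (hh (measurableSet_singleton b)))
    ((hg (measurableSet_singleton c)).inter (hh (measurableSet_singleton c)))
  · exact Set.disjoint_left.2 fun x ⟨(hfa : f x = a), _⟩ ⟨(hfb : f x = b), _⟩ => hab (hfa ▸ hfb)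
  · exact Set.disjoint_left.2 fun x ⟨_, (hga : g x = a)⟩ ⟨(hgc : g x = c), _⟩ => hac (hga ▸ hgc)
  · exact Set.disjoint_left.2 fun x ⟨_, (hhb : h x = b)⟩ ⟨_, (hhc : h x = c)⟩ => hbc (hhb ▸ hhc)

/-- There is no family of measurable functions `F p : Ω → Fin 3`, indexed by probability
distributions `p` on `{1,2,3}`, such that (1) `μ (F p ⁻¹' {i}) = p i` for all `p`, `i`, and
(2) `μ (F p ⁻¹' {i} ∩ F q ⁻¹' {i}) = min (μ (F p ⁻¹' {i})) (μ (F q ⁻¹' {i}))` for all `p`, `q`, `i`. -/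
theorem stmt_9 (Ω : Type*) [MeasurableSpace Ω] (μ : Measure Ω) [IsProbabilityMeasure μ] :
    ¬ ∃ F : (Fin 3 → ℝ) → Ω → Fin 3,
      (∀ p : Fin 3 → ℝ, (∀ i, 0 ≤ p i) → (∑ i, p i = 1) → Measurable (F p)) ∧
      (∀ p : Fin 3 → ℝ, (∀ i, 0 ≤ p i) → (∑ i, p i = 1) →
        ∀ i, μ (F p ⁻¹' {i}) = ENNReal.ofReal (p i)) ∧
      (∀ p q : Fin 3 → ℝ, (∀ i, 0 ≤ p i) → (∑ i, p i = 1) →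
        (∀ i, 0 ≤ q i) → (∑ i, q i = 1) →
        ∀ i, μ (F p ⁻¹' {i} ∩ F q ⁻¹' {i}) = min (μ (F p ⁻¹' {i})) (μ (F q ⁻¹' {i}))) := by
  rintro ⟨F, hmeas, hmarg, hcoup⟩
  have hagree : ∀ {i j k l a : Fin 3}, uniformOnPair i j a = 2⁻¹ → uniformOnPair k l a = 2⁻¹ →
      μ (F (uniformOnPair i j) ⁻¹' {a} ∩ F (uniformOnPair k l) ⁻¹' {a}) = 2⁻¹ := by
    intro i j k l a hij hkl
    rw [hcoup _ _ (uniformOnPair_nonneg i j) (sum_uniformOnPair i j) (uniformOnPair_nonneg k l)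
      (sum_uniformOnPair k l), hmarg _ (uniformOnPair_nonneg i j) (sum_uniformOnPair i j),
      hmarg _ (uniformOnPair_nonneg k l) (sum_uniformOnPair k l), hij, hkl, min_self,
      ENNReal.ofReal_inv_of_pos two_pos, ENNReal.ofReal_ofNat]
  have hF : ∀ i j : Fin 3, Measurable (F (uniformOnPair i j)) := fun i j =>
    hmeas _ (uniformOnPair_nonneg i j) (sum_uniformOnPair i j)
  have htotal := measure_agreement_events_sum_le_one (μ := μ)
    (hF 0 1) (hF 0 2) (hF 1 2) (a := 0) (b := 1) (c := 2) (by decide) (by decide) (by decide)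
  rw [hagree (uniformOnPair_apply_left (by decide)) (uniformOnPair_apply_left (by decide)),
    hagree (uniformOnPair_apply_right (by decide)) (uniformOnPair_apply_left (by decide)),
    hagree (uniformOnPair_apply_right (by decide)) (uniformOnPair_apply_right (by decide)),
    ENNReal.inv_two_add_inv_two] at htotal
  exact (ENNReal.lt_add_right ENNReal.one_ne_top (by simp)).not_ge htotal
end

section
/- Given a nonnegative matrix A indexed by (x,z) with column sums Σ_x A_{x,z} = π(z) for a probability distribution π(z), and positive numbers l_x, define c_x = exp(l_x) / Σ_z A_{x,z} (assuming Σ_z A_{x,z} > 0 for all x), c* = max_x c_x, d_z = Σ_x A_{x,z} c_x / π(z), and π(x|z) = (c_x/c*)·(A_{x,z}/π(z)) + (1 − d_z/c*)·(exp(l_x)/Σ_{x'} exp(l_{x'})). Then Σ_z π(z) π(x|z) = exp(l_x)/Σ_{x'} exp(l_{x'}) for every x. -/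
open Finset in
/-- Gadget 2 accept-reject correction: with `c x = exp (l x) / ∑ z, A x z`, `c* = max_x c x`,
`d z = (∑ x, A x z * c x) / π z`, and
`π(x|z) = (c x / c*) * (A x z / π z) + (1 − d z / c*) * (exp (l x) / ∑ x', exp (l x'))`,
marginalizing out `z` gives the softmax: `∑ z, π z * π(x|z) = exp (l x) / ∑ x', exp (l x')`. -/
theorem stmt_12 (X Z : Type*) [Fintype X] [Fintype Z] [Nonempty X]
    (A : X → Z → ℝ) (hA : ∀ x z, 0 ≤ A x z)
    (π : Z → ℝ) (hπpos : ∀ z, 0 < π z) (hπsum : ∑ z, π z = 1)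
    (hcol : ∀ z, ∑ x, A x z = π z)
    (l : X → ℝ) (hrow : ∀ x, 0 < ∑ z, A x z)
    (c : X → ℝ) (hc : ∀ x, c x = Real.exp (l x) / ∑ z, A x z)
    (cstar : ℝ) (hcstar : cstar = ⨆ x, c x)
    (d : Z → ℝ) (hd : ∀ z, d z = (∑ x, A x z * c x) / π z)
    (πcond : X → Z → ℝ)
    (hπcond : ∀ x z, πcond x z =
      (c x / cstar) * (A x z / π z) +
        (1 - d z / cstar) * (Real.exp (l x) / ∑ x', Real.exp (l x'))) :
    ∀ x, ∑ z, π z * πcond x z = Real.exp (l x) / ∑ x', Real.exp (l x') := by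
  intro x
  have hS : 0 < ∑ x', Real.exp (l x') :=
    Finset.sum_pos (fun _ _ => Real.exp_pos _) Finset.univ_nonempty
  have hcpos : ∀ x', 0 < c x' := fun x' => by
    rw [hc]; exact div_pos (Real.exp_pos _) (hrow x')
  have hcs : 0 < cstar := by
    obtain ⟨x0⟩ := ‹Nonempty X›
    have hb : BddAbove (Set.range c) := (Set.finite_range c).bddAbove
    have := le_ciSup hb x0
    rw [hcstar]; exact lt_of_lt_of_le (hcpos x0) this
  set E := Real.exp (l x) / ∑ x', Real.exp (l x') with hE
  have hAc : ∀ x', c x' * (∑ z, A x' z) = Real.exp (l x') := fun x' => by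
    rw [hc, div_mul_eq_mul_div, mul_div_assoc, div_self (hrow x').ne', mul_one]
  have h1 : ∀ z, π z * πcond x z =
      (c x / cstar) * A x z + π z * E - (∑ x', A x' z * c x') * E / cstar := by
    intro z
    have e1 : π z * ((c x / cstar) * (A x z / π z)) = (c x / cstar) * A x z := by
      field_simp [(hπpos z).ne']
    have e2 : (∑ x', A x' z * c x') = d z * π z := by
      rw [hd, div_mul_cancel₀ _ (hπpos z).ne']
    rw [hπcond, mul_add, e1, e2]
    ring
  have hswap : ∑ z, ∑ x', A x' z * c x' = ∑ x', Real.exp (l x') := by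
    rw [Finset.sum_comm]
    exact Finset.sum_congr rfl fun x' _ => by
      rw [← Finset.sum_mul, mul_comm]; exact hAc x'
  calc ∑ z, π z * πcond x z
      = ∑ z, ((c x / cstar) * A x z + π z * E - (∑ x', A x' z * c x') * E / cstar) :=
        Finset.sum_congr rfl fun z _ => h1 z
    _ = (c x / cstar) * (∑ z, A x z) + (∑ z, π z) * E
          - (∑ z, ∑ x', A x' z * c x') * E / cstar := by
        rw [Finset.sum_sub_distrib, Finset.sum_add_distrib, ← Finset.mul_sum,
          ← Finset.sum_mul, ← Finset.sum_div, ← Finset.sum_mul]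
    _ = Real.exp (l x) / ∑ x', Real.exp (l x') := by
        rw [hswap, hπsum, hE, one_mul]
        have h2 : (c x / cstar) * (∑ z, A x z) = Real.exp (l x) / cstar := by
          rw [div_mul_eq_mul_div, hAc]
        rw [h2]
        field_simp
        ring
end

section
/- For categorical distributions p ∝ exp(l^(1)) and q ∝ exp(l^(2)) and real-valued functions h_1, h_2, if G_2 denotes the joint law of Gumbels with locations l^(2), then E_{x∼p}[h_1(x)] = Σ_y q(y) · E_{γ ∼ (G_2 | y)}[h_1(argmax_k (l^(1)_k − l^(2)_k + γ_k))], where (G_2 | y) is G_2 conditioned on y being the argmax of γ. -/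
open MeasureTheory ProbabilityTheory

namespace GumbelAux

lemma meas_g : Measurable fun u : ℝ => -Real.log (-Real.log u) :=
  (Real.measurable_log.comp Real.measurable_log.neg).neg

lemma gumbel_Iio (s : ℝ) :
    gumbel (Set.Iio s) = ENNReal.ofReal (Real.exp (-Real.exp (-s))) := by
  set c := Real.exp (-Real.exp (-s)) with hc
  have hc0 : 0 < c := Real.exp_pos _
  have hc1 : c < 1 := by
    rw [hc, Real.exp_lt_one_iff]
    simpa using Real.exp_pos (-s)
  rw [gumbel, Measure.map_apply meas_g measurableSet_Iio,
    Measure.restrict_apply (meas_g measurableSet_Iio)]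
  have hset : (fun u : ℝ => -Real.log (-Real.log u)) ⁻¹' Set.Iio s ∩ Set.Ioo 0 1
      = Set.Ioo 0 c := by
    ext u
    simp only [Set.mem_inter_iff, Set.mem_preimage, Set.mem_Iio, Set.mem_Ioo]
    constructor
    · rintro ⟨hlt, hu0, hu1⟩
      refine ⟨hu0, ?_⟩
      have hlogneg : Real.log u < 0 := Real.log_neg hu0 hu1
      have hpos : 0 < -Real.log u := by linarith
      have h1 : -s < Real.log (-Real.log u) := by linarith
      have h2 : Real.exp (-s) < -Real.log u := (Real.lt_log_iff_exp_lt hpos).mp h1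
      have h3 : Real.log u < -Real.exp (-s) := by linarith
      calc u = Real.exp (Real.log u) := (Real.exp_log hu0).symm
        _ < c := Real.exp_lt_exp.mpr h3
    · rintro ⟨hu0, huc⟩
      have hu1 : u < 1 := lt_trans huc hc1
      refine ⟨?_, hu0, hu1⟩
      have hlogneg : Real.log u < 0 := Real.log_neg hu0 hu1
      have hpos : 0 < -Real.log u := by linarith
      have h3 : Real.log u < -Real.exp (-s) := by
        have := (Real.log_lt_log_iff hu0 hc0).mpr huc
        rwa [hc, Real.log_exp] at this
      have h2 : Real.exp (-s) < -Real.log u := by linarith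
      have h1 : -s < Real.log (-Real.log u) := (Real.lt_log_iff_exp_lt hpos).mpr h2
      linarith
  rw [hset, Real.volume_Ioo, sub_zero]

lemma map_Iio (a t : ℝ) :
    (gumbel.map fun x => x + a) (Set.Iio t)
      = ENNReal.ofReal (Real.exp (-Real.exp (a - t))) := by
  rw [Measure.map_apply (measurable_add_const a) measurableSet_Iio]
  have : (fun x : ℝ => x + a) ⁻¹' Set.Iio t = Set.Iio (t - a) := by
    ext x
    simp only [Set.mem_preimage, Set.mem_Iio]
    constructor <;> intro h <;> linarith
  rw [this, gumbel_Iio]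
  ring_nf

instance gumbel_prob : IsProbabilityMeasure gumbel := by
  constructor
  rw [gumbel, Measure.map_apply meas_g MeasurableSet.univ, Set.preimage_univ,
    Measure.restrict_apply MeasurableSet.univ, Set.univ_inter, Real.volume_Ioo]
  norm_num

lemma gumbel_singleton (s : ℝ) : gumbel {s} = 0 := by
  rw [gumbel, Measure.map_apply meas_g (measurableSet_singleton s),
    Measure.restrict_apply (meas_g (measurableSet_singleton s))]
  have hsub : ((fun u : ℝ => -Real.log (-Real.log u)) ⁻¹' {s} ∩ Set.Ioo 0 1).Subsingleton := by
    rintro u ⟨hu, hu0, hu1⟩ v ⟨hv, hv0, hv1⟩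
    simp only [Set.mem_preimage, Set.mem_singleton_iff] at hu hv
    have hulog : 0 < -Real.log u := by have := Real.log_neg hu0 hu1; linarith
    have hvlog : 0 < -Real.log v := by have := Real.log_neg hv0 hv1; linarith
    have h1 : Real.log (-Real.log u) = Real.log (-Real.log v) := by
      have := hu.trans hv.symm; linarith
    have h2 : -Real.log u = -Real.log v := by
      have := congrArg Real.exp h1
      rwa [Real.exp_log hulog, Real.exp_log hvlog] at this
    have h3 : Real.log u = Real.log v := by linarith
    calc u = Real.exp (Real.log u) := (Real.exp_log hu0).symm
      _ = Real.exp (Real.log v) := by rw [h3]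
      _ = v := Real.exp_log hv0
  exact hsub.measure_zero volume

lemma map_singleton (a t : ℝ) : (gumbel.map fun x => x + a) {t} = 0 := by
  rw [Measure.map_apply (measurable_add_const a) (measurableSet_singleton t)]
  have : (fun x : ℝ => x + a) ⁻¹' {t} = {t - a} := by
    ext x
    simp only [Set.mem_preimage, Set.mem_singleton_iff]
    constructor <;> intro h <;> linarith
  rw [this, gumbel_singleton]

instance map_prob (a : ℝ) : IsProbabilityMeasure (gumbel.map fun x => x + a) :=
  Measure.isProbabilityMeasure_map (measurable_add_const a).aemeasurable

variable {K : ℕ}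

/-- The joint law of independent Gumbels with locations `l`. -/
noncomputable def Gl (l : Fin K → ℝ) : Measure (Fin K → ℝ) :=
  Measure.pi fun k => gumbel.map fun t => t + l k

instance Gl_prob (l : Fin K → ℝ) : IsProbabilityMeasure (Gl l) := by
  unfold Gl; infer_instance

/-- The strict-argmax set. -/
def Aset (y : Fin K) : Set (Fin K → ℝ) := {γ | ∀ j, j ≠ y → γ j < γ y}

lemma A_meas (y : Fin K) : MeasurableSet (Aset y) := by
  have : Aset y = ⋂ j, ⋂ (_ : j ≠ y), {γ : Fin K → ℝ | γ j < γ y} := by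
    ext γ; simp [Aset]
  rw [this]
  exact MeasurableSet.iInter fun j => MeasurableSet.iInter fun _ =>
    measurableSet_lt (measurable_pi_apply _) (measurable_pi_apply _)

lemma A_disj : Pairwise (Function.onFun Disjoint (Aset (K := K))) := by
  intro y z hyz
  simp only [Function.onFun, Set.disjoint_left]
  intro γ hy hz
  exact lt_asymm (hy z (Ne.symm hyz)) (hz y hyz)
set_option maxHeartbeats 1000000 in
lemma key (l : Fin K → ℝ) (y : Fin K) :
    Gl l (Aset y) = ENNReal.ofReal (Real.exp (l y) / ∑ k, Real.exp (l k)) := by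
  classical
  obtain ⟨p, hp⟩ : ∃ p : Fin K → Prop, p = fun j => j = y := ⟨_, rfl⟩
  haveI hdp : DecidablePred p := Classical.decPred p
  have hpy : p y := by rw [hp]
  have hne : ∀ j : Fin K, ¬ p j → j ≠ y := fun j hj => by rw [hp] at hj; exact hj
  have hne' : ∀ j : Fin K, j ≠ y → ¬ p j := fun j hj => by rw [hp]; exact hj
  letI hu : Unique {i // p i} :=
    ⟨⟨⟨y, hpy⟩⟩, fun a => Subtype.ext
      (show a.1 = y by have := a.2; simp only [hp] at this; exact this)⟩
  set μ : Fin K → Measure ℝ := fun k => gumbel.map fun t => t + l k with hμ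
  haveI : ∀ k, IsProbabilityMeasure (μ k) := fun k => map_prob (l k)
  set Cy : ℝ := ∑ j ∈ Finset.univ.erase y, Real.exp (l j) with hCy
  have hCy0 : 0 ≤ Cy := Finset.sum_nonneg fun _ _ => (Real.exp_pos _).le
  set c : ℝ := Cy * Real.exp (-(l y)) with hc
  have hc0 : 0 ≤ c := mul_nonneg hCy0 (Real.exp_pos _).le
  set S : Set (({i // p i} → ℝ) × ({i // ¬ p i} → ℝ)) :=
    {x | ∀ j : {i // ¬ p i}, x.2 j < x.1 ⟨y, hpy⟩} with hS
  have hSm : MeasurableSet S := by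
    have : S = ⋂ j : {i // ¬ p i},
        {x : ({i // p i} → ℝ) × ({i // ¬ p i} → ℝ) | x.2 j < x.1 ⟨y, hpy⟩} := by
      ext x; simp [hS]
    rw [this]
    exact MeasurableSet.iInter fun j =>
      measurableSet_lt (measurable_snd.eval) (measurable_fst.eval)
  have hpre : (MeasurableEquiv.piEquivPiSubtypeProd (fun _ : Fin K => ℝ) p) ⁻¹' S
      = Aset y := by
    ext γ
    constructor
    · intro h j hj
      exact h ⟨j, hne' j hj⟩
    · intro h j
      exact h j.1 (hne j.1 j.2)
  have mp := measurePreserving_piEquivPiSubtypeProd μ p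
  have hGA := mp.measure_preimage hSm.nullMeasurableSet
  rw [hpre] at hGA
  rw [show Gl l = Measure.pi μ from rfl, hGA, Measure.prod_apply hSm]
  -- the sum over the complement subtype
  have hsum : ∑ j : {i // ¬ p i}, Real.exp (l j) = Cy := by
    rw [hCy]
    exact (Finset.sum_subtype _ (fun x => by simp [hp]) (fun j => Real.exp (l j))).symm
  set F : ℝ → ENNReal := fun t => ENNReal.ofReal (Real.exp (-(Cy * Real.exp (-t)))) with hF
  have hFm : Measurable F := by
    apply ENNReal.measurable_ofReal.comp
    fun_prop
  have hinner : ∀ t : ℝ,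
      (Measure.pi fun i : {i // ¬ p i} => μ i) {b : {i // ¬ p i} → ℝ | ∀ j, b j < t}
      = F t := by
    intro t
    have h1 : {b : {i // ¬ p i} → ℝ | ∀ j, b j < t} = Set.univ.pi fun _ => Set.Iio t := by
      ext b; simp
    rw [h1, Measure.pi_pi]
    have h2 : ∀ j : {i // ¬ p i}, μ j (Set.Iio t)
        = ENNReal.ofReal (Real.exp (-Real.exp (l j - t))) := fun j => map_Iio (l j) t
    simp_rw [h2]
    rw [← ENNReal.ofReal_prod_of_nonneg (fun _ _ => (Real.exp_pos _).le)]
    rw [hF]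
    congr 1
    rw [← Real.exp_sum]
    congr 1
    calc (∑ j : {i // ¬ p i}, -Real.exp (l ↑j - t))
        = ∑ j : {i // ¬ p i}, Real.exp (l ↑j) * -Real.exp (-t) := by
          refine Finset.sum_congr rfl fun j _ => ?_
          rw [mul_neg, ← Real.exp_add, ← sub_eq_add_neg]
      _ = Cy * -Real.exp (-t) := by rw [← Finset.sum_mul, hsum]
      _ = -(Cy * Real.exp (-t)) := by ring
  have hstep1 : ∀ a : {i // p i} → ℝ,
      (Measure.pi fun i : {i // ¬ p i} => μ i) (Prod.mk a ⁻¹' S) = F (a ⟨y, hpy⟩) :=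
    fun a => hinner (a ⟨y, hpy⟩)
  rw [lintegral_congr hstep1]
  have mpU := @measurePreserving_piUnique {i // p i} (Subtype.fintype p) (fun _ => ℝ) hu
    (fun _ => Real.measurableSpace) (fun i => μ i)
  refine Eq.trans (mpU.lintegral_comp (f := F) hFm) ?_
  show ∫⁻ t, F t ∂(μ y) = _
  have step3 : ∫⁻ t, F t ∂(μ y)
      = ∫⁻ u in Set.Ioo (0:ℝ) 1, F (-Real.log (-Real.log u) + l y) := by
    show ∫⁻ t, F t ∂(gumbel.map fun t => t + l y) = _
    rw [lintegral_map hFm (measurable_add_const (l y)), gumbel]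
    exact lintegral_map (f := fun a => F (a + l y))
      (hFm.comp (measurable_add_const (l y))) meas_g
  have step4 : ∫⁻ u in Set.Ioo (0:ℝ) 1, F (-Real.log (-Real.log u) + l y)
      = ∫⁻ u in Set.Ioo (0:ℝ) 1, ENNReal.ofReal (u ^ c) := by
    refine setLIntegral_congr_fun measurableSet_Ioo
      (fun u hu => ?_)
    have hu0 := hu.1
    have hlog : 0 < -Real.log u := by have := Real.log_neg hu.1 hu.2; linarith
    have hexp : Real.exp (-(-Real.log (-Real.log u) + l y))
        = -Real.log u * Real.exp (-(l y)) := by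
      rw [neg_add, neg_neg, Real.exp_add, Real.exp_log hlog]
    simp only [hF]
    refine congrArg ENNReal.ofReal ?_
    rw [Real.rpow_def_of_pos hu0, hexp, hc]
    refine congrArg Real.exp ?_
    ring
  have hint : IntegrableOn (fun u : ℝ => u ^ c) (Set.Ioo 0 1) volume := by
    have h1 : IntervalIntegrable (fun u : ℝ => u ^ c) volume 0 1 :=
      intervalIntegral.intervalIntegrable_rpow' (by linarith)
    have h2 := (intervalIntegrable_iff_integrableOn_Ioc_of_le
      (by norm_num : (0:ℝ) ≤ 1)).mp h1
    exact h2.mono_set Set.Ioo_subset_Ioc_self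
  have hnn : 0 ≤ᵐ[volume.restrict (Set.Ioo (0:ℝ) 1)] fun u : ℝ => u ^ c :=
    (ae_restrict_iff' measurableSet_Ioo).2
      (Filter.Eventually.of_forall fun u hu => Real.rpow_nonneg hu.1.le c)
  have step5 : ∫⁻ u in Set.Ioo (0:ℝ) 1, ENNReal.ofReal (u ^ c)
      = ENNReal.ofReal (∫ u in Set.Ioo (0:ℝ) 1, u ^ c) :=
    (ofReal_integral_eq_lintegral_ofReal hint hnn).symm
  have step6 : ∫ u in Set.Ioo (0:ℝ) 1, (u:ℝ) ^ c = 1 / (c + 1) := by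
    rw [← integral_Ioc_eq_integral_Ioo,
      ← intervalIntegral.integral_of_le (by norm_num : (0:ℝ) ≤ 1),
      integral_rpow (Or.inl (by linarith : (-1:ℝ) < c)),
      Real.one_rpow, Real.zero_rpow (by linarith : c + 1 ≠ 0)]
    ring
  have hsum_split : Cy + Real.exp (l y) = ∑ k, Real.exp (l k) := by
    rw [hCy]
    exact Finset.sum_erase_add Finset.univ _ (Finset.mem_univ y)
  have hS0 : 0 < ∑ k, Real.exp (l k) := by
    rw [← hsum_split]; positivity
  have hval : 1 / (c + 1) = Real.exp (l y) / ∑ k, Real.exp (l k) := by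
    have h1 : Real.exp (l y) * Real.exp (-(l y)) = 1 := by
      rw [← Real.exp_add]; simp
    rw [div_eq_div_iff (by linarith : (0:ℝ) < c + 1).ne' hS0.ne', ← hsum_split, hc]
    linear_combination (-Cy) * h1
  rw [step3, step4, step5, step6, hval]

set_option maxHeartbeats 1000000 in
lemma tie (l : Fin K → ℝ) {i j : Fin K} (hij : i ≠ j) (c : ℝ) :
    Gl l {γ : Fin K → ℝ | γ i = γ j + c} = 0 := by
  classical
  obtain ⟨p, hp⟩ : ∃ p : Fin K → Prop, p = fun m => m = i := ⟨_, rfl⟩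
  haveI hdp : DecidablePred p := Classical.decPred p
  have hpi : p i := by rw [hp]
  have hji : ¬ p j := by rw [hp]; exact fun h => hij h.symm
  set μ : Fin K → Measure ℝ := fun k => gumbel.map fun t => t + l k with hμ
  haveI : ∀ k, IsProbabilityMeasure (μ k) := fun k => map_prob (l k)
  set S : Set (({m // p m} → ℝ) × ({m // ¬ p m} → ℝ)) :=
    {x | x.1 ⟨i, hpi⟩ = x.2 ⟨j, hji⟩ + c} with hS
  have hSm : MeasurableSet S :=
    measurableSet_eq_fun (measurable_fst.eval) (by fun_prop)
  have hpre : (MeasurableEquiv.piEquivPiSubtypeProd (fun _ : Fin K => ℝ) p) ⁻¹' S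
      = {γ : Fin K → ℝ | γ i = γ j + c} := rfl
  have mp := measurePreserving_piEquivPiSubtypeProd μ p
  have hGA := mp.measure_preimage hSm.nullMeasurableSet
  rw [hpre] at hGA
  rw [show Gl l = Measure.pi μ from rfl, hGA, Measure.prod_apply hSm]
  have hzero : ∀ a : {m // p m} → ℝ,
      (Measure.pi fun m : {m // ¬ p m} => μ m) (Prod.mk a ⁻¹' S) = 0 := by
    intro a
    have hset : Prod.mk a ⁻¹' S
        = (Function.eval (⟨j, hji⟩ : {m // ¬ p m}) : ({m // ¬ p m} → ℝ) → ℝ) ⁻¹'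
          {a ⟨i, hpi⟩ - c} := by
      ext b
      constructor
      · intro h
        have h' : a ⟨i, hpi⟩ = b ⟨j, hji⟩ + c := h
        show b ⟨j, hji⟩ = a ⟨i, hpi⟩ - c
        linarith
      · intro h
        have h' : b ⟨j, hji⟩ = a ⟨i, hpi⟩ - c := h
        show a ⟨i, hpi⟩ = b ⟨j, hji⟩ + c
        linarith
    rw [hset]
    exact Measure.pi_eval_preimage_null _ (map_singleton (l j) _)
  simp only [hzero, lintegral_const, zero_mul]

lemma ae_strict (l : Fin K → ℝ) (hK : 0 < K) (d : Fin K → ℝ) :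
    ∀ᵐ γ ∂(Gl l), ∃ y, ∀ j, j ≠ y → d j + γ j < d y + γ y := by
  classical
  set N : Set (Fin K → ℝ) :=
    ⋃ (i) (j) (_ : i ≠ j), {γ : Fin K → ℝ | γ i = γ j + (d j - d i)} with hN
  have hN0 : Gl l N = 0 :=
    measure_iUnion_null fun i => measure_iUnion_null fun j =>
      measure_iUnion_null fun h => tie l h _
  have hsub : {γ : Fin K → ℝ | ¬ ∃ y, ∀ j, j ≠ y → d j + γ j < d y + γ y} ⊆ N := by
    intro γ hγ
    obtain ⟨y, -, hy⟩ := Finset.exists_max_image Finset.univ (fun k => d k + γ k)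
      ⟨⟨0, hK⟩, Finset.mem_univ _⟩
    push_neg at hγ
    obtain ⟨j, hjy, hle⟩ := hγ y
    have heq : d j + γ j = d y + γ y := le_antisymm (hy j (Finset.mem_univ j)) hle
    refine Set.mem_iUnion.2 ⟨j, Set.mem_iUnion.2 ⟨y, Set.mem_iUnion.2 ⟨hjy, ?_⟩⟩⟩
    show γ j = γ y + (d y - d j)
    linarith
  exact ae_iff.mpr (measure_mono_null hsub hN0)

lemma ae_mem_A (l : Fin K → ℝ) (hK : 0 < K) :
    ∀ᵐ γ ∂(Gl l), ∃ x, γ ∈ Aset x := by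
  filter_upwards [ae_strict l hK (fun _ => 0)] with γ hγ
  obtain ⟨y, hy⟩ := hγ
  exact ⟨y, fun j hj => by have := hy j hj; simpa using this⟩

lemma amax_ae' (h₁ : Fin K → ℝ) (amax : (Fin K → ℝ) → Fin K)
    (hamax : ∀ (f : Fin K → ℝ) (k : Fin K), f k ≤ f (amax f)) (l : Fin K → ℝ)
    (ψ : (Fin K → ℝ) → (Fin K → ℝ))
    (hae : ∀ᵐ γ ∂(Gl l), ∃ x, ψ γ ∈ Aset x) :
    (fun γ => h₁ (amax (ψ γ)))
      =ᵐ[Gl l] fun γ => ∑ x, (ψ ⁻¹' Aset x).indicator (fun _ => h₁ x) γ := by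
  filter_upwards [hae] with γ hγ
  obtain ⟨x, hx⟩ := hγ
  have hax : amax (ψ γ) = x := by
    by_contra h
    exact absurd (hamax (ψ γ) x) (not_le.mpr (hx _ h))
  rw [hax, Finset.sum_eq_single x]
  · exact (Set.indicator_of_mem (show γ ∈ ψ ⁻¹' Aset x from hx) (fun _ => h₁ x)).symm
  · intro b _ hbx
    refine Set.indicator_of_notMem (fun hmem' => ?_) _
    exact lt_asymm (hx b hbx) (hmem' x (Ne.symm hbx))
  · intro h; exact absurd (Finset.mem_univ x) h

lemma amax_aesm (h₁ : Fin K → ℝ) (amax : (Fin K → ℝ) → Fin K)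
    (hamax : ∀ (f : Fin K → ℝ) (k : Fin K), f k ≤ f (amax f)) (l : Fin K → ℝ)
    (hK : 0 < K) :
    AEStronglyMeasurable (fun γ => h₁ (amax γ)) (Gl l) := by
  refine ⟨fun γ => ∑ x, (Aset x).indicator (fun _ => h₁ x) γ, ?_, ?_⟩
  · exact (Finset.measurable_sum _ fun x _ =>
      (measurable_const.indicator (A_meas x))).stronglyMeasurable
  · exact amax_ae' h₁ amax hamax l id (ae_mem_A l hK)

lemma integral_amax (h₁ : Fin K → ℝ) (amax : (Fin K → ℝ) → Fin K)
    (hamax : ∀ (f : Fin K → ℝ) (k : Fin K), f k ≤ f (amax f)) (l : Fin K → ℝ)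
    (hK : 0 < K) :
    ∫ γ, h₁ (amax γ) ∂(Gl l)
      = ∑ x, (Real.exp (l x) / ∑ k, Real.exp (l k)) * h₁ x := by
  have hcongr : (fun γ => h₁ (amax γ))
      =ᵐ[Gl l] fun γ => ∑ x, (Aset x).indicator (fun _ => h₁ x) γ :=
    amax_ae' h₁ amax hamax l id (ae_mem_A l hK)
  rw [integral_congr_ae hcongr,
    integral_finset_sum _ (fun x _ => (integrable_const (h₁ x)).indicator (A_meas x))]
  refine Finset.sum_congr rfl fun x _ => ?_
  rw [integral_indicator_const (h₁ x) (A_meas x), measureReal_def, key l x,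
    ENNReal.toReal_ofReal (by positivity), smul_eq_mul]

end GumbelAux

open GumbelAux

/-- For `p ∝ exp l₁` and `q ∝ exp l₂`, if `G₂` is the joint law of independent Gumbels with
locations `l₂`, then
`E_{x∼p}[h₁ x] = ∑ y, q y * E_{γ ∼ (G₂ | argmax γ = y)}[h₁ (argmax_k (l₁ k − l₂ k + γ k))]`. -/
theorem stmt_14 (K : ℕ) (hK : 0 < K) (l₁ l₂ : Fin K → ℝ) (h₁ : Fin K → ℝ)
    (G₂ : Measure (Fin K → ℝ))
    (hG₂ : G₂ = Measure.pi fun k => gumbel.map fun t => t + l₂ k)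
    (amax : (Fin K → ℝ) → Fin K) (hamax : ∀ (f : Fin K → ℝ) (k : Fin K), f k ≤ f (amax f)) :
    ∑ x, (Real.exp (l₁ x) / ∑ k, Real.exp (l₁ k)) * h₁ x =
      ∑ y, (Real.exp (l₂ y) / ∑ k, Real.exp (l₂ k)) *
        ∫ γ, h₁ (amax fun k => l₁ k - l₂ k + γ k)
          ∂(G₂[|{γ | ∀ j, j ≠ y → γ j < γ y}]) := by
  classical
  subst hG₂
  have hsum₂ : 0 < ∑ k, Real.exp (l₂ k) :=
    Finset.sum_pos (fun _ _ => Real.exp_pos _) ⟨⟨0, hK⟩, Finset.mem_univ _⟩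
  set φ : (Fin K → ℝ) → (Fin K → ℝ) := fun γ k => l₁ k - l₂ k + γ k with hφ
  have hφm : Measurable φ :=
    measurable_pi_iff.mpr fun k => (measurable_pi_apply k).const_add _
  have hφmp : MeasurePreserving φ (Gl l₂) (Gl l₁) := by
    refine measurePreserving_pi _ _ (fun k => ⟨measurable_const_add _, ?_⟩)
    rw [Measure.map_map (measurable_const_add _) (measurable_add_const _)]
    congr 1
    funext t
    show l₁ k - l₂ k + (t + l₂ k) = t + l₁ k
    ring
  have haeφ : ∀ᵐ γ ∂(Gl l₂), ∃ x, φ γ ∈ Aset x := by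
    filter_upwards [ae_strict l₂ hK (fun k => l₁ k - l₂ k)] with γ hγ
    obtain ⟨y, hy⟩ := hγ
    exact ⟨y, hy⟩
  have hcongrφ : (fun γ => h₁ (amax (φ γ))) =ᵐ[Gl l₂]
      fun γ => ∑ x, (φ ⁻¹' Aset x).indicator (fun _ => h₁ x) γ :=
    amax_ae' h₁ amax hamax l₂ φ haeφ
  have hInt0 : Integrable
      (fun γ => ∑ x, (φ ⁻¹' Aset x).indicator (fun _ => h₁ x) γ) (Gl l₂) :=
    integrable_finset_sum _ fun x _ =>
      (integrable_const (h₁ x)).indicator (hφm (A_meas x))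
  have hg_int : Integrable (fun γ => h₁ (amax (φ γ))) (Gl l₂) :=
    hInt0.congr hcongrφ.symm
  have hmain : ∫ γ, h₁ (amax (φ γ)) ∂(Gl l₂)
      = ∑ x, (Real.exp (l₁ x) / ∑ k, Real.exp (l₁ k)) * h₁ x := by
    have hsm : AEStronglyMeasurable (fun γ => h₁ (amax γ)) ((Gl l₂).map φ) := by
      rw [hφmp.map_eq]
      exact amax_aesm h₁ amax hamax l₁ hK
    rw [← integral_amax h₁ amax hamax l₁ hK, ← hφmp.map_eq,
      integral_map hφm.aemeasurable hsm]
  have hterm : ∀ y : Fin K, (Real.exp (l₂ y) / ∑ k, Real.exp (l₂ k)) *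
      ∫ γ, h₁ (amax (φ γ)) ∂((Gl l₂)[|Aset y])
      = ∫ γ in Aset y, h₁ (amax (φ γ)) ∂(Gl l₂) := by
    intro y
    have hq0 : 0 < Real.exp (l₂ y) / ∑ k, Real.exp (l₂ k) :=
      div_pos (Real.exp_pos _) hsum₂
    rw [ProbabilityTheory.cond, integral_smul_measure, key l₂ y,
      ENNReal.toReal_inv, ENNReal.toReal_ofReal hq0.le, smul_eq_mul,
      ← mul_assoc, mul_inv_cancel₀ hq0.ne', one_mul]
  have hpart : ∑ y, ∫ γ in Aset y, h₁ (amax (φ γ)) ∂(Gl l₂)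
      = ∫ γ, h₁ (amax (φ γ)) ∂(Gl l₂) := by
    have hUae : ∀ᵐ γ ∂(Gl l₂), γ ∈ ⋃ y, Aset y := by
      filter_upwards [ae_mem_A l₂ hK] with γ hγ
      obtain ⟨x, hx⟩ := hγ
      exact Set.mem_iUnion.2 ⟨x, hx⟩
    have hiu := integral_iUnion (μ := Gl l₂) (f := fun γ => h₁ (amax (φ γ)))
      A_meas A_disj hg_int.integrableOn
    rw [tsum_fintype] at hiu
    rw [← hiu, Measure.restrict_eq_self_of_ae_mem hUae]
  exact hmain.symm.trans (hpart.symm.trans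
    (Finset.sum_congr rfl fun y _ => (hterm y).symm))
end
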